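/- arXiv:2106.04339 — 2 statements merged into one kernel-verified Lean document; each statement's English description precedes it below -/
import Mathlib

section
/- Let R be a commutative ring with a derivation 𝓛 : R → R, and let ħ, t₁₃, t₂₃, t₁₂, t₂₂, t₁₀, t₁₁, t₂₁, q, p ∈ R with ħ invertible. Assume 𝓛 annihilates ħ, t₁₃, t₂₃, t₁₂, t₂₂, t₁₀, and that 𝓛(t₁₁) = ħ t₂₃, 𝓛(t₂₁) = ħ t₁₃. Assume further the first-order system: 𝓛(q) = −2p/ħ − (t₁₃+t₂₃)q² − (t₁₂+t₂₂)q − (t₁₁+t₂₁), and 𝓛(p) = (2(t₁₃+t₂₃)q + t₁₂+t₂₂)·p + 4ħ t₁₃t₂₃ q³ + 3ħ(t₁₃t₂₂ + t₂₃t₁₂)q² + 2ħ(t₁₃t₂₁ + t₂₃t₁₁ + t₁₂t₂₂)q + ħ(t₁₂t₂₁ + t₁₁t₂₂ − (t₁₃−t₂₃)t₁₀) − ħ² t₂₃. Then 𝓛(𝓛(q)) = 2(t₁₃−t₂₃)² q³ + 3(t₁₃−t₂₃)(t₁₂−t₂₂) q² + ((t₁₂−t₂₂)² + 2(t₁₃−t₂₃)(t₁₁−t₂₁))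 q + (t₁₂−t₂₂)(t₁₁−t₂₁) + (2t₁₀−ħ)(t₁₃−t₂₃). -/
/-!
The hypotheses make `L` a `ℤ`-derivation of `R`, so `L (L q)` is obtained by differentiating the
expression for `L q`. In the result the terms containing `p` cancel, leaving a polynomial in `q`.
-/

namespace Derivation

variable {R : Type*} [CommRing R]

def ofAddLeibniz (L : R → R) (hadd : ∀ x y, L (x + y) = L x + L y)
    (hmul : ∀ x y, L (x * y) = L x * y + x * L y) : Derivation ℤ R R :=
  mk' (AddMonoidHom.mk' L hadd).toIntLinearMap fun x y => by
    simp only [AddMonoidHom.coe_toIntLinearMap, AddMonoidHom.mk'_apply, hmul, smul_eq_mul]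
    ring

@[simp]
theorem coe_ofAddLeibniz (L : R → R) (hadd : ∀ x y, L (x + y) = L x + L y)
    (hmul : ∀ x y, L (x * y) = L x * y + x * L y) : ⇑(ofAddLeibniz L hadd hmul) = L :=
  rfl

end Derivation

theorem painleve2_second_order_general (R : Type*) [CommRing R] (L : R → R)
    (hadd : ∀ x y : R, L (x + y) = L x + L y)
    (hmul : ∀ x y : R, L (x * y) = L x * y + x * L y)
    (hbar : R) [Invertible hbar]
    (t13 t23 t12 t22 t10 t11 t21 q p : R)
    (hhbar0 : L hbar = 0) (h13 : L t13 = 0) (h23 : L t23 = 0) (h12 : L t12 = 0)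
    (h22 : L t22 = 0)
    (h11 : L t11 = hbar * t23) (h21 : L t21 = hbar * t13)
    (hq : L q = -(2 * p * ⅟hbar) - (t13 + t23) * q ^ 2 - (t12 + t22) * q - (t11 + t21))
    (hp : L p = (2 * (t13 + t23) * q + t12 + t22) * p
        + 4 * hbar * t13 * t23 * q ^ 3 + 3 * hbar * (t13 * t22 + t23 * t12) * q ^ 2
        + 2 * hbar * (t13 * t21 + t23 * t11 + t12 * t22) * q
        + hbar * (t12 * t21 + t11 * t22 - (t13 - t23) * t10) - hbar ^ 2 * t23) :
    L (L q) = 2 * (t13 - t23) ^ 2 * q ^ 3 + 3 * (t13 - t23) * (t12 - t22) * q ^ 2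
      + ((t12 - t22) ^ 2 + 2 * (t13 - t23) * (t11 - t21)) * q
      + (t12 - t22) * (t11 - t21) + (2 * t10 - hbar) * (t13 - t23) := by
  obtain ⟨D, rfl⟩ : ∃ D : Derivation ℤ R R, ⇑D = L :=
    ⟨_, Derivation.coe_ofAddLeibniz L hadd hmul⟩
  have hinv : D ⅟hbar = 0 := by simp [D.leibniz_invOf, hhbar0]
  have htwo : D (2 : R) = 0 := by exact_mod_cast D.map_natCast 2
  have hLLq : D (D q) = -(2 * D p * ⅟hbar) - (t13 + t23) * (2 * q * D q)
      - (t12 + t22) * D q - hbar * (t13 + t23) := by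
    conv_lhs => rw [hq]
    simp only [map_add, map_sub, map_neg, D.leibniz, D.leibniz_pow, smul_eq_mul, nsmul_eq_mul,
      Nat.cast_ofNat, Nat.add_one_sub_one, pow_one, mul_zero, add_zero, zero_add,
      htwo, hinv, h13, h23, h12, h22, h11, h21]
    ring
  rw [hLLq, hp, hq]
  -- the `hbar`-multiples in `D p` meet the factor `⅟hbar`
  linear_combination (2 * hbar * t23 - 2 * (4 * t13 * t23 * q ^ 3
    + 3 * (t13 * t22 + t23 * t12) * q ^ 2 + 2 * (t13 * t21 + t23 * t11 + t12 * t22) * q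
    + (t12 * t21 + t11 * t22 - (t13 - t23) * t10))) * mul_invOf_self hbar

/-- The second-order evolution equation (pre-Painlevé 2) derived from the first-order
Hamiltonian system via the derivation `𝓛`. -/
theorem painleve2_second_order (R : Type*) [CommRing R] (L : R → R)
    (hadd : ∀ x y : R, L (x + y) = L x + L y)
    (hmul : ∀ x y : R, L (x * y) = L x * y + x * L y)
    (hbar : R) [Invertible hbar]
    (t13 t23 t12 t22 t10 t11 t21 q p : R)
    (hhbar0 : L hbar = 0) (h13 : L t13 = 0) (h23 : L t23 = 0) (h12 : L t12 = 0)
    (h22 : L t22 = 0) (h10 : L t10 = 0)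
    (h11 : L t11 = hbar * t23) (h21 : L t21 = hbar * t13)
    (hq : L q = -(2 * p * ⅟hbar) - (t13 + t23) * q ^ 2 - (t12 + t22) * q - (t11 + t21))
    (hp : L p = (2 * (t13 + t23) * q + t12 + t22) * p
        + 4 * hbar * t13 * t23 * q ^ 3 + 3 * hbar * (t13 * t22 + t23 * t12) * q ^ 2
        + 2 * hbar * (t13 * t21 + t23 * t11 + t12 * t22) * q
        + hbar * (t12 * t21 + t11 * t22 - (t13 - t23) * t10) - hbar ^ 2 * t23) :
    L (L q) = 2 * (t13 - t23) ^ 2 * q ^ 3 + 3 * (t13 - t23) * (t12 - t22) * q ^ 2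
      + ((t12 - t22) ^ 2 + 2 * (t13 - t23) * (t11 - t21)) * q
      + (t12 - t22) * (t11 - t21) + (2 * t10 - hbar) * (t13 - t23) :=
  painleve2_second_order_general R L hadd hmul hbar t13 t23 t12 t22 t10 t11 t21 q p hhbar0 h13 h23
    h12 h22 h11 h21 hq hp
end

section
/- Let ħ, t₁₀, a, b, c ∈ ℂ with a ≠ 0, and let q : ℂ → ℂ be twice differentiable satisfying, for all τ, ħ² q''(τ) = 2a² q(τ)³ + 3ab q(τ)² + (b² − 2a²τ) q(τ) − abτ + (2t₁₀ − ħ)a. Let u ∈ ℂ be any cube root of −a/2 (u³ = −a/2), and define the change of variables τ(t) := −t/(2u²) − b²/(4a²) and q̃(t) := u·(q(τ(t)) + b/(2a)). Then q̃ satisfies the Painlevé 2 equation ħ² q̃''(t) = 2 q̃(t)³ + t·q̃(t) − (t₁₀ − ħ/2) for all t. -/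
/-!
The substitution `τ = -t/(2u²) - b²/(4a²)` is affine in `t`, so by the chain rule
`q̃''(t) = u q''(τ) / (4u⁴)`. Inserting the hypothesised equation for `q''(τ)`, the shift
`q ↦ q + b/(2a)` completes the cube and removes the quadratic term, while the scaling by the
cube root `u` of `-a/2` normalises the cubic and linear coefficients to those of Painlevé 2.
-/

section AffineReparametrisation

variable {𝕜 : Type*} [NontriviallyNormedField 𝕜] {f σ : 𝕜 → 𝕜} {m : 𝕜}

theorem deriv_comp_of_hasDerivAt_const (hf : Differentiable 𝕜 f)
    (hσ : ∀ t, HasDerivAt σ m t) (k d : 𝕜) :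
    deriv (fun t => k * (f (σ t) + d)) = fun t => k * (deriv f (σ t) * m) := by
  funext t
  exact ((((hf (σ t)).hasDerivAt.comp t (hσ t)).add_const d).const_mul k).deriv

theorem deriv_deriv_comp_of_hasDerivAt_const (hf : Differentiable 𝕜 f)
    (hf' : Differentiable 𝕜 (deriv f)) (hσ : ∀ t, HasDerivAt σ m t) (k d t : 𝕜) :
    deriv (deriv fun t => k * (f (σ t) + d)) t = k * (deriv (deriv f) (σ t) * m * m) := by
  rw [deriv_comp_of_hasDerivAt_const hf hσ]
  exact ((((hf' (σ t)).hasDerivAt.comp t (hσ t)).mul_const m).const_mul k).deriv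

end AffineReparametrisation

theorem painleve2_of_rescaled_equation {K : Type*} [Field K] [CharZero K]
    {hbar t10 a b u t Q D : K} (ha : a ≠ 0) (hu : u ^ 3 = -a / 2)
    (heq : hbar ^ 2 * D =
      2 * a ^ 2 * Q ^ 3 + 3 * a * b * Q ^ 2
        + (b ^ 2 - 2 * a ^ 2 * (-t / (2 * u ^ 2) - b ^ 2 / (4 * a ^ 2))) * Q
        - a * b * (-t / (2 * u ^ 2) - b ^ 2 / (4 * a ^ 2)) + (2 * t10 - hbar) * a) :
    hbar ^ 2 * (u * (D * (-1 / (2 * u ^ 2)) * (-1 / (2 * u ^ 2)))) =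
      2 * (u * (Q + b / (2 * a))) ^ 3 + t * (u * (Q + b / (2 * a))) - (t10 - hbar / 2) := by
  have hu0 : u ≠ 0 := by
    rintro rfl
    exact ha (by linear_combination 2 * hu)
  field_simp at heq ⊢
  linear_combination (u ^ 4 / 2) * heq +
    (2 * a * (a - 2 * u ^ 3) * hbar ^ 2 * D + 4 * a ^ 2 * u ^ 3 * (2 * t10 - hbar)) * hu

theorem painleve2_rescaling_general (hbar t10 a b u : ℂ) (ha : a ≠ 0) (hu : u ^ 3 = -a / 2)
    (q : ℂ → ℂ) (hq1 : Differentiable ℂ q) (hq2 : Differentiable ℂ (deriv q))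
    (heq : ∀ τ : ℂ, hbar ^ 2 * deriv (deriv q) τ =
      2 * a ^ 2 * q τ ^ 3 + 3 * a * b * q τ ^ 2 + (b ^ 2 - 2 * a ^ 2 * τ) * q τ
        - a * b * τ + (2 * t10 - hbar) * a)
    (qt : ℂ → ℂ)
    (hqt : qt = fun t =>
      u * (q (-t / (2 * u ^ 2) - b ^ 2 / (4 * a ^ 2)) + b / (2 * a))) :
    ∀ t : ℂ, hbar ^ 2 * deriv (deriv qt) t = 2 * qt t ^ 3 + t * qt t - (t10 - hbar / 2) := by
  intro t
  have hτ : ∀ s : ℂ, HasDerivAt (fun s => -s / (2 * u ^ 2) - b ^ 2 / (4 * a ^ 2))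
      (-1 / (2 * u ^ 2)) s := fun s => ((hasDerivAt_id s).neg.div_const _).sub_const _
  subst hqt
  rw [deriv_deriv_comp_of_hasDerivAt_const hq1 hq2 hτ]
  exact painleve2_of_rescaled_equation ha hu (heq _)

/-- The rescaling turning the second-order evolution equation into the Painlevé 2
equation `hbar² q̃'' = 2q̃³ + t q̃ − (t₁₀ − hbar/2)`. -/
theorem painleve2_rescaling (hbar t10 a b c u : ℂ) (ha : a ≠ 0) (hu : u ^ 3 = -a / 2)
    (q : ℂ → ℂ) (hq1 : Differentiable ℂ q) (hq2 : Differentiable ℂ (deriv q))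
    (heq : ∀ τ : ℂ, hbar ^ 2 * deriv (deriv q) τ =
      2 * a ^ 2 * q τ ^ 3 + 3 * a * b * q τ ^ 2 + (b ^ 2 - 2 * a ^ 2 * τ) * q τ
        - a * b * τ + (2 * t10 - hbar) * a)
    (qt : ℂ → ℂ)
    (hqt : qt = fun t =>
      u * (q (-t / (2 * u ^ 2) - b ^ 2 / (4 * a ^ 2)) + b / (2 * a))) :
    ∀ t : ℂ, hbar ^ 2 * deriv (deriv qt) t = 2 * qt t ^ 3 + t * qt t - (t10 - hbar / 2) :=
  painleve2_rescaling_general hbar t10 a b u ha hu q hq1 hq2 heq qt hqt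
end
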